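/- Let O ⊂ ℝ be an open set and for ξ ∈ O let r_ξ = sup{r > 0 : (ξ, ξ+r) ⊂ O}. Suppose {(ξ_i, ξ_i + r_i)} is a countable disjoint subfamily with O ⊆ ∪_i (ξ_i − 2r_i, ξ_i + 3r_i) and let [a, a+s) ⊂ O with s > 0. Then there exists an index i such that r_i ≥ s/18 and (ξ_i − 21 r_i, ξ_i + 21 r_i) ⊇ [a, a+s). -/
import Mathlib


open Set

/-- Vitali-type covering step: if `O ⊆ ℝ` is open and bounded, `r_ξ` is the
length of the maximal open interval `(ξ, ξ + r)` contained in `O`, and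
`{(ξ i, ξ i + r i)}` is a countable disjoint subfamily with
`O ⊆ ⋃ i (ξ i − 2 r i, ξ i + 3 r i)`, then for any `[a, a+s) ⊆ O` with `s > 0`
there is `i` with `r i ≥ s/18` and `(ξ i − 21 r i, ξ i + 21 r i) ⊇ [a, a+s)`. -/
theorem stmt_7 (O : Set ℝ) (hO : IsOpen O) (hbdd : Bornology.IsBounded O)
    (ξ r : ℕ → ℝ) (hmem : ∀ i, ξ i ∈ O) (hr : ∀ i, 0 < r i)
    (hmax : ∀ i, r i = sSup {ρ : ℝ | 0 < ρ ∧ Ioo (ξ i) (ξ i + ρ) ⊆ O})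
    (hsub : ∀ i, Ioo (ξ i) (ξ i + r i) ⊆ O)
    (hdisj : Pairwise fun i j =>
      Disjoint (Ioo (ξ i) (ξ i + r i)) (Ioo (ξ j) (ξ j + r j)))
    (hcover : O ⊆ ⋃ i, Ioo (ξ i - 2 * r i) (ξ i + 3 * r i))
    (a s : ℝ) (hs : 0 < s) (hIco : Ico a (a + s) ⊆ O) :
    ∃ i, s / 18 ≤ r i ∧ Ico a (a + s) ⊆ Ioo (ξ i - 21 * r i) (ξ i + 21 * r i) := by
  by_cases hcase : ∃ i, ξ i ∈ Ioo (a + s/3) (a + 2*s/3)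
  · -- some ξ i lies in the middle third; then r i ≥ s/3
    obtain ⟨i, hi1, hi2⟩ := hcase
    -- bound above for the sup set
    obtain ⟨d, hd⟩ : ∃ d, ∀ x ∈ O, x ≤ d := hbdd.bddAbove
    have hbdd' : BddAbove {ρ : ℝ | 0 < ρ ∧ Ioo (ξ i) (ξ i + ρ) ⊆ O} := by
      refine ⟨2 * (d - ξ i), fun ρ hρ => ?_⟩
      have : ξ i + ρ/2 ∈ O := hρ.2 ⟨by linarith [hρ.1], by linarith [hρ.1]⟩
      have := hd _ this
      linarith
    have hmemS : (s/3 : ℝ) ∈ {ρ : ℝ | 0 < ρ ∧ Ioo (ξ i) (ξ i + ρ) ⊆ O} := by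
      refine ⟨by linarith, fun x hx => hIco ⟨by linarith [hx.1], by linarith [hx.2]⟩⟩
    have hri : s/3 ≤ r i := (hmax i) ▸ le_csSup hbdd' hmemS
    refine ⟨i, by linarith, fun x hx => ⟨?_, ?_⟩⟩
    · have := hx.1; linarith
    · have := hx.2; linarith
  · -- otherwise use the covering at the midpoint
    push_neg at hcase
    have hmO : a + s/2 ∈ O := hIco ⟨by linarith, by linarith⟩
    obtain ⟨i, hi⟩ := mem_iUnion.1 (hcover hmO)
    obtain ⟨h1, h2⟩ := hi
    have hξ := hcase i
    rw [mem_Ioo, not_and_or, not_lt, not_lt] at hξ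
    have hri : s/18 ≤ r i := by
      rcases hξ with h | h
      · -- ξ i ≥ a + 2s/3 : 2 r i > s/6
        linarith
      · -- ξ i ≤ a + s/3 : 3 r i > s/6
        linarith
    refine ⟨i, hri, fun x hx => ⟨?_, ?_⟩⟩
    · have := hx.1
      -- ξ i < a + s/2 + 2 r i, so ξ i - 21 r i < a + s/2 - 19 r i ≤ a + s/2 - 19 s/18 < a
      linarith
    · have := hx.2
      linarith
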